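/- arXiv:2007.11304 — 2 statements merged into one kernel-verified Lean document; each statement's English description precedes it below -/
import Mathlib

section
/- In the exterior algebra Λ(ℝ⁷), for t > 0, ε ∈ {−1,+1} and a₁, a₂, a₃ ∈ ℝ, the equation f ∧ ψ_{t,ε} = 0 holds if and only if either a₁ = a₂ = a₃ = 0, or t = 1/√2, ε = −1 and a₁ = a₂ = 0, or t = 1/√2 and ε = +1 (with a₁, a₂, a₃ arbitrary). Equivalently, the connection A = i(a₁η₁ + a₂η₂ + a₃η₃) is a (pointwise model) G₂-instanton with respect to ψ_{t,ε} exactly in these cases. -/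
/-!
Pointwise model in the exterior algebra Λ(ℝ⁷) with standard basis e₁,…,e₇:
η₁ = e₁, η₂ = e₂, η₃ = e₃ (indices 0,1,2 below), and
ω₁ = e₄∧e₅ + e₆∧e₇, ω₂ = e₄∧e₆ − e₅∧e₇, ω₃ = e₄∧e₇ + e₅∧e₆,
vol = e₄∧e₅∧e₆∧e₇ (indices 3,4,5,6 below).
-/

noncomputable section

/-- The standard basis vectors of ℝ⁷, as elements of the exterior algebra. -/
def e (i : Fin 7) : ExteriorAlgebra ℝ (Fin 7 → ℝ) :=
  ExteriorAlgebra.ι ℝ (Pi.single i 1)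

def η₂₃ : ExteriorAlgebra ℝ (Fin 7 → ℝ) := e 1 * e 2
def η₃₁ : ExteriorAlgebra ℝ (Fin 7 → ℝ) := e 2 * e 0
def η₁₂ : ExteriorAlgebra ℝ (Fin 7 → ℝ) := e 0 * e 1

def ω₁ : ExteriorAlgebra ℝ (Fin 7 → ℝ) := e 3 * e 4 + e 5 * e 6
def ω₂ : ExteriorAlgebra ℝ (Fin 7 → ℝ) := e 3 * e 5 - e 4 * e 6
def ω₃ : ExteriorAlgebra ℝ (Fin 7 → ℝ) := e 3 * e 6 + e 4 * e 5

def vol : ExteriorAlgebra ℝ (Fin 7 → ℝ) := e 3 * e 4 * e 5 * e 6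

/-- The 4-form ψ_{t,ε} = vol − t²(ε η₂₃∧ω₁ + ε η₃₁∧ω₂ + η₁₂∧ω₃). -/
def ψ (t ε : ℝ) : ExteriorAlgebra ℝ (Fin 7 → ℝ) :=
  vol - t ^ 2 • (ε • (η₂₃ * ω₁) + ε • (η₃₁ * ω₂) + η₁₂ * ω₃)

/-- The 2-form f = a₁(ω₁ + η₂₃) + a₂(ω₂ + η₃₁) + a₃(ω₃ + η₁₂), modelling
the curvature F_A = −2i f of the connection A = i(a₁η₁ + a₂η₂ + a₃η₃). -/
def f (a₁ a₂ a₃ : ℝ) : ExteriorAlgebra ℝ (Fin 7 → ℝ) :=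
  a₁ • (ω₁ + η₂₃) + a₂ • (ω₂ + η₃₁) + a₃ • (ω₃ + η₁₂)


-- ### Auxiliary machinery ###

lemma e_sq (i : Fin 7) : e i * e i = 0 := ExteriorAlgebra.ι_sq_zero _

lemma e_swap {i j : Fin 7} (h : j < i) : e i * e j = -(e j * e i) := by
  unfold e
  exact eq_neg_of_add_eq_zero_left (ExteriorAlgebra.ι_add_mul_swap _ _)

lemma e_sq' (i : Fin 7) (x : ExteriorAlgebra ℝ (Fin 7 → ℝ)) : e i * (e i * x) = 0 := by
  rw [← mul_assoc, e_sq, zero_mul]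

lemma e_swap' {i j : Fin 7} (h : j < i) (x : ExteriorAlgebra ℝ (Fin 7 → ℝ)) :
    e i * (e j * x) = -(e j * (e i * x)) := by
  rw [← mul_assoc, e_swap h, neg_mul, mul_assoc]

def M₁ : ExteriorAlgebra ℝ (Fin 7 → ℝ) := e 1 * (e 2 * (e 3 * (e 4 * (e 5 * e 6))))
def M₂ : ExteriorAlgebra ℝ (Fin 7 → ℝ) := e 0 * (e 2 * (e 3 * (e 4 * (e 5 * e 6))))
def M₃ : ExteriorAlgebra ℝ (Fin 7 → ℝ) := e 0 * (e 1 * (e 3 * (e 4 * (e 5 * e 6))))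

lemma key (t ε a₁ a₂ a₃ : ℝ) :
    f a₁ a₂ a₃ * ψ t ε =
      (a₁*(1-2*ε*t^2)) • M₁ - (a₂*(1-2*ε*t^2)) • M₂ + (a₃*(1-2*t^2)) • M₃ := by
  simp only [f, ψ, vol, ω₁, ω₂, ω₃, η₂₃, η₃₁, η₁₂, M₁, M₂, M₃, mul_add, add_mul, mul_sub,
    sub_mul, smul_add, smul_sub, smul_mul_assoc, mul_smul_comm, mul_assoc, smul_smul,
    smul_neg, neg_mul, mul_neg, neg_neg, e_sq, e_sq', mul_zero, zero_mul, smul_zero]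
  simp (config := { decide := true }) only [e_swap, e_swap', e_sq, e_sq', mul_zero, zero_mul,
    smul_zero, neg_mul, mul_neg, neg_neg, smul_neg, mul_assoc, smul_smul, mul_smul_comm,
    smul_mul_assoc, neg_zero]
  module

def D (S : Fin 6 → Fin 7) : (Fin 7 → ℝ) [⋀^Fin 6]→ₗ[ℝ] ℝ :=
  (Matrix.detRowAlternating).compLinearMap (LinearMap.funLeft ℝ ℝ S)

def F (S : Fin 6 → Fin 7) : ∀ i : ℕ, (Fin 7 → ℝ) [⋀^Fin i]→ₗ[ℝ] ℝ :=
  Function.update (fun _ => 0) 6 (D S)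

def L (S : Fin 6 → Fin 7) : ExteriorAlgebra ℝ (Fin 7 → ℝ) →ₗ[ℝ] ℝ :=
  ExteriorAlgebra.liftAlternating (F S)

lemma L_ιMulti (S : Fin 6 → Fin 7) (v : Fin 6 → Fin 7 → ℝ) :
    L S (ExteriorAlgebra.ιMulti ℝ 6 v) = Matrix.det (Matrix.of fun i j => v i (S j)) := by
  rw [L, ExteriorAlgebra.liftAlternating_apply_ιMulti]
  rw [show F S 6 = D S from Function.update_self _ _ _]
  simp only [D, AlternatingMap.compLinearMap_apply, LinearMap.funLeft_apply]
  exact congrArg _ (by funext i j; simp [LinearMap.funLeft_apply, Matrix.of_apply] :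
    (fun i => (LinearMap.funLeft ℝ ℝ S) (v i)) = Matrix.of fun i j => v i (S j))

lemma M_eq (w : Fin 6 → Fin 7) :
    e (w 0) * (e (w 1) * (e (w 2) * (e (w 3) * (e (w 4) * e (w 5))))) =
      ExteriorAlgebra.ιMulti ℝ 6 (fun i => Pi.single (w i) 1) := by
  rw [ExteriorAlgebra.ιMulti_apply]
  simp [List.ofFn_succ, e, mul_assoc]

def w₁ : Fin 6 → Fin 7 := ![1,2,3,4,5,6]
def w₂ : Fin 6 → Fin 7 := ![0,2,3,4,5,6]
def w₃ : Fin 6 → Fin 7 := ![0,1,3,4,5,6]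

def N (w : Fin 6 → Fin 7) : ExteriorAlgebra ℝ (Fin 7 → ℝ) :=
  ExteriorAlgebra.ιMulti ℝ 6 (fun i => Pi.single (w i) 1)

lemma L_diag (w : Fin 6 → Fin 7) (hw : ∀ i j, (w i = w j) = (i = j)) : L w (N w) = 1 := by
  rw [N, L_ιMulti]
  have h : (Matrix.of fun i j => (Pi.single (w i) 1 : Fin 7 → ℝ) (w j))
      = (1 : Matrix (Fin 6) (Fin 6) ℝ) := by
    ext i j
    simp [Pi.single_apply, Matrix.one_apply, hw j i, hw i j, eq_comm]
  rw [h, Matrix.det_one]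

lemma L_zero (S w : Fin 6 → Fin 7) (i : Fin 6) (hi : ∀ j, w i ≠ S j) : L S (N w) = 0 := by
  rw [N, L_ιMulti]
  apply Matrix.det_eq_zero_of_row_eq_zero i
  intro j
  simp [Pi.single_apply, (hi j).symm]

lemma M₁_eq : M₁ = N w₁ := by
  have h := M_eq w₁
  simp only [w₁] at h
  simpa [M₁, N, w₁] using h

lemma M₂_eq : M₂ = N w₂ := by
  have h := M_eq w₂
  simpa [M₂, N, w₂] using h

lemma M₃_eq : M₃ = N w₃ := by
  have h := M_eq w₃
  simpa [M₃, N, w₃] using h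

lemma indep {c₁ c₂ c₃ : ℝ} (h : c₁ • M₁ - c₂ • M₂ + c₃ • M₃ = 0) :
    c₁ = 0 ∧ c₂ = 0 ∧ c₃ = 0 := by
  rw [M₁_eq, M₂_eq, M₃_eq] at h
  refine ⟨?_, ?_, ?_⟩
  · have h1 := congrArg (L w₁) h
    simpa [map_sub, map_smul, L_diag w₁ (by decide), L_zero w₁ w₂ 0 (by decide),
      L_zero w₁ w₃ 0 (by decide)] using h1
  · have h2 := congrArg (L w₂) h
    simpa [map_sub, map_smul, L_diag w₂ (by decide), L_zero w₂ w₁ 0 (by decide),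
      L_zero w₂ w₃ 1 (by decide)] using h2
  · have h3 := congrArg (L w₃) h
    simpa [map_sub, map_smul, L_diag w₃ (by decide), L_zero w₃ w₁ 1 (by decide),
      L_zero w₃ w₂ 1 (by decide)] using h3

lemma t_iff {t : ℝ} (ht : 0 < t) : t = 1 / Real.sqrt 2 ↔ 1 - 2 * t ^ 2 = 0 := by
  have hs : Real.sqrt (1/2) = 1 / Real.sqrt 2 := by
    rw [one_div, one_div, ← Real.sqrt_inv]
  constructor
  · intro h
    rw [← hs] at h
    have : t ^ 2 = 1/2 := by rw [h, Real.sq_sqrt]; norm_num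
    linarith
  · intro h
    have h2 : t ^ 2 = 1/2 := by linarith
    calc t = Real.sqrt (t ^ 2) := (Real.sqrt_sq ht.le).symm
    _ = Real.sqrt (1/2) := by rw [h2]
    _ = 1 / Real.sqrt 2 := hs

/-- The (pointwise model of the) G₂-instanton equation f ∧ ψ_{t,ε} = 0 holds iff
either a₁ = a₂ = a₃ = 0, or t = 1/√2, ε = −1 and a₁ = a₂ = 0, or
t = 1/√2 and ε = +1. -/
theorem stmt_3 (t ε a₁ a₂ a₃ : ℝ) (ht : 0 < t) (hε : ε = 1 ∨ ε = -1) :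
    f a₁ a₂ a₃ * ψ t ε = 0 ↔
      (a₁ = 0 ∧ a₂ = 0 ∧ a₃ = 0) ∨
      (t = 1 / Real.sqrt 2 ∧ ε = -1 ∧ a₁ = 0 ∧ a₂ = 0) ∨
      (t = 1 / Real.sqrt 2 ∧ ε = 1) := by
  rw [key]
  constructor
  · intro h
    obtain ⟨h1, h2, h3⟩ := indep h
    rcases hε with hε | hε
    · subst hε
      by_cases hc : 1 - 2 * t ^ 2 = 0
      · exact Or.inr (Or.inr ⟨(t_iff ht).mpr hc, rfl⟩)
      · left
        have hc' : a₁ * (1 - 2 * t ^ 2) = 0 := by linarith [h1]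
        refine ⟨?_, ?_, ?_⟩
        · rcases mul_eq_zero.mp (by linarith [h1] : a₁ * (1 - 2 * t ^ 2) = 0) with h | h
          · exact h
          · exact absurd h hc
        · rcases mul_eq_zero.mp (by linarith [h2] : a₂ * (1 - 2 * t ^ 2) = 0) with h | h
          · exact h
          · exact absurd h hc
        · rcases mul_eq_zero.mp h3 with h | h
          · exact h
          · exact absurd h hc
    · subst hε
      have hp : 1 - 2 * (-1 : ℝ) * t ^ 2 ≠ 0 := by nlinarith
      have ha1 : a₁ = 0 := by
        rcases mul_eq_zero.mp h1 with h | h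
        · exact h
        · exact absurd h hp
      have ha2 : a₂ = 0 := by
        rcases mul_eq_zero.mp h2 with h | h
        · exact h
        · exact absurd h hp
      by_cases hc : 1 - 2 * t ^ 2 = 0
      · exact Or.inr (Or.inl ⟨(t_iff ht).mpr hc, rfl, ha1, ha2⟩)
      · left
        refine ⟨ha1, ha2, ?_⟩
        rcases mul_eq_zero.mp h3 with h | h
        · exact h
        · exact absurd h hc
  · rintro (⟨h1, h2, h3⟩ | ⟨htt, hε', h1, h2⟩ | ⟨htt, hε'⟩)
    · rw [h1, h2, h3]; simp
    · have hc : 1 - 2 * t ^ 2 = 0 := (t_iff ht).mp htt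
      rw [h1, h2, hc]
      simp
    · subst hε'
      have hc : 1 - 2 * t ^ 2 = 0 := (t_iff ht).mp htt
      have hc' : 1 - 2 * (1:ℝ) * t ^ 2 = 0 := by linarith
      rw [hc, hc']
      simp
end
end

section
/- Let t > 0, ε ∈ {−1,+1} and a₁, a₂, a₃ ∈ ℝ with r² = a₁² + a₂² + a₃². Then (a₁,a₂,a₃) solves the system (S): (4r² − (1 − 2εt²))a₁ = 0, (4r² − (1 − 2εt²))a₂ = 0, (4r² − (1 − 2t²))a₃ = 0, if and only if one of the following holds: (i) a₁ = a₂ = a₃ = 0; (ii) ε = +1, 0 < t < 1/√2 and a₁² + a₂² + a₃² = (1 − 2t²)/4; (iii) ε = −1, a₃ = 0 and a₁² + a₂² = (1 + 2t²)/4; (iv) ε = −1, 0 < t < 1/√2, a₁ = a₂ = 0 and a₃² = (1 − 2t²)/4. In particular, for ε = +1 and t ≥ 1/√2 the only solution is 0, and for ε = −1 and t ≥ 1/√2 the nonzero solutions form exactly the circle {a₃ = 0, a₁² + a₂² = (1 + 2t²)/4}. -/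
/-- The real system (S) characterizing deformed G₂-instantons of the form
A = i(a₁η₁ + a₂η₂ + a₃η₃) on the trivial line bundle with respect to φ_{t,ε}:
(4r² − (1 − 2εt²))a₁ = 0, (4r² − (1 − 2εt²))a₂ = 0, (4r² − (1 − 2t²))a₃ = 0,
where r² = a₁² + a₂² + a₃². -/
def S (t ε a₁ a₂ a₃ : ℝ) : Prop :=
  (4 * (a₁ ^ 2 + a₂ ^ 2 + a₃ ^ 2) - (1 - 2 * ε * t ^ 2)) * a₁ = 0 ∧
  (4 * (a₁ ^ 2 + a₂ ^ 2 + a₃ ^ 2) - (1 - 2 * ε * t ^ 2)) * a₂ = 0 ∧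
  (4 * (a₁ ^ 2 + a₂ ^ 2 + a₃ ^ 2) - (1 - 2 * t ^ 2)) * a₃ = 0

theorem stmt_4 (t ε a₁ a₂ a₃ : ℝ) (ht : 0 < t) (hε : ε = 1 ∨ ε = -1) :
    (S t ε a₁ a₂ a₃ ↔
      (a₁ = 0 ∧ a₂ = 0 ∧ a₃ = 0) ∨
      (ε = 1 ∧ t < 1 / Real.sqrt 2 ∧ a₁ ^ 2 + a₂ ^ 2 + a₃ ^ 2 = (1 - 2 * t ^ 2) / 4) ∨
      (ε = -1 ∧ a₃ = 0 ∧ a₁ ^ 2 + a₂ ^ 2 = (1 + 2 * t ^ 2) / 4) ∨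
      (ε = -1 ∧ t < 1 / Real.sqrt 2 ∧ a₁ = 0 ∧ a₂ = 0 ∧ a₃ ^ 2 = (1 - 2 * t ^ 2) / 4)) ∧
    (ε = 1 → 1 / Real.sqrt 2 ≤ t →
      (S t ε a₁ a₂ a₃ ↔ a₁ = 0 ∧ a₂ = 0 ∧ a₃ = 0)) ∧
    (ε = -1 → 1 / Real.sqrt 2 ≤ t → ¬(a₁ = 0 ∧ a₂ = 0 ∧ a₃ = 0) →
      (S t ε a₁ a₂ a₃ ↔ a₃ = 0 ∧ a₁ ^ 2 + a₂ ^ 2 = (1 + 2 * t ^ 2) / 4)) := by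
  have hlt : t < 1 / Real.sqrt 2 ↔ 2 * t ^ 2 < 1 := by
    rw [one_div, ← Real.sqrt_inv, Real.lt_sqrt ht.le]
    constructor <;> intro h <;> nlinarith
  have hle : 1 / Real.sqrt 2 ≤ t ↔ 1 ≤ 2 * t ^ 2 := by
    rw [← not_lt, hlt, not_lt]
  have main : S t ε a₁ a₂ a₃ ↔
      (a₁ = 0 ∧ a₂ = 0 ∧ a₃ = 0) ∨
      (ε = 1 ∧ t < 1 / Real.sqrt 2 ∧ a₁ ^ 2 + a₂ ^ 2 + a₃ ^ 2 = (1 - 2 * t ^ 2) / 4) ∨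
      (ε = -1 ∧ a₃ = 0 ∧ a₁ ^ 2 + a₂ ^ 2 = (1 + 2 * t ^ 2) / 4) ∨
      (ε = -1 ∧ t < 1 / Real.sqrt 2 ∧ a₁ = 0 ∧ a₂ = 0 ∧ a₃ ^ 2 = (1 - 2 * t ^ 2) / 4) := by
    rcases hε with rfl | rfl
    · constructor
      · rintro ⟨h1, h2, h3⟩
        by_cases hF : 4 * (a₁ ^ 2 + a₂ ^ 2 + a₃ ^ 2) - (1 - 2 * 1 * t ^ 2) = 0
        · by_cases hz : a₁ = 0 ∧ a₂ = 0 ∧ a₃ = 0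
          · exact Or.inl hz
          · refine Or.inr (Or.inl ⟨rfl, ?_, by linarith⟩)
            rw [hlt]
            have hpos : 0 < a₁ ^ 2 + a₂ ^ 2 + a₃ ^ 2 := by
              rcases not_and_or.mp hz with h | h
              · positivity
              rcases not_and_or.mp h with h | h <;> positivity
            nlinarith
        · refine Or.inl ⟨?_, ?_, ?_⟩
          · exact (mul_eq_zero.mp h1).resolve_left hF
          · exact (mul_eq_zero.mp h2).resolve_left hF
          · have : 4 * (a₁ ^ 2 + a₂ ^ 2 + a₃ ^ 2) - (1 - 2 * t ^ 2) ≠ 0 := by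
              intro h; exact hF (by linarith)
            exact (mul_eq_zero.mp h3).resolve_left this
      · rintro (⟨rfl, rfl, rfl⟩ | ⟨-, -, hr⟩ | ⟨h, -⟩ | ⟨h, -⟩)
        · exact ⟨by ring, by ring, by ring⟩
        · exact ⟨by linear_combination 4 * a₁ * hr, by linear_combination 4 * a₂ * hr,
            by linear_combination 4 * a₃ * hr⟩
        · norm_num at h
        · norm_num at h
    · constructor
      · rintro ⟨h1, h2, h3⟩
        by_cases h12 : a₁ = 0 ∧ a₂ = 0
        · obtain ⟨rfl, rfl⟩ := h12
          by_cases h3z : a₃ = 0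
          · exact Or.inl ⟨rfl, rfl, h3z⟩
          · have hF : 4 * (0 ^ 2 + 0 ^ 2 + a₃ ^ 2) - (1 - 2 * t ^ 2) = 0 :=
              (mul_eq_zero.mp h3).resolve_right h3z
            refine Or.inr (Or.inr (Or.inr ⟨rfl, ?_, rfl, rfl, by nlinarith⟩))
            rw [hlt]
            have : 0 < a₃ ^ 2 := by positivity
            nlinarith
        · have hF : 4 * (a₁ ^ 2 + a₂ ^ 2 + a₃ ^ 2) - (1 - 2 * (-1) * t ^ 2) = 0 := by
            rcases not_and_or.mp h12 with h | h
            · exact (mul_eq_zero.mp h1).resolve_right h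
            · exact (mul_eq_zero.mp h2).resolve_right h
          have h3z : a₃ = 0 := by
            have h4 : 4 * (a₁ ^ 2 + a₂ ^ 2 + a₃ ^ 2) - (1 - 2 * t ^ 2) ≠ 0 := by
              intro h; nlinarith
            exact (mul_eq_zero.mp h3).resolve_left h4
          refine Or.inr (Or.inr (Or.inl ⟨rfl, h3z, ?_⟩))
          rw [h3z] at hF; nlinarith
      · rintro (⟨rfl, rfl, rfl⟩ | ⟨h, -⟩ | ⟨-, rfl, hr⟩ | ⟨-, -, rfl, rfl, hr⟩)
        · exact ⟨by ring, by ring, by ring⟩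
        · norm_num at h
        · exact ⟨by linear_combination 4 * a₁ * hr, by linear_combination 4 * a₂ * hr,
            by ring⟩
        · exact ⟨by ring, by ring, by linear_combination 4 * a₃ * hr⟩
  refine ⟨main, ?_, ?_⟩
  · rintro rfl hts
    rw [main]
    constructor
    · rintro (h | ⟨-, hlt', -⟩ | ⟨h, -⟩ | ⟨h, -⟩)
      · exact h
      · exact absurd hts (not_le.mpr hlt')
      · norm_num at h
      · norm_num at h
    · exact Or.inl
  · rintro rfl hts hnz
    rw [main]
    constructor
    · rintro (h | ⟨h, -⟩ | ⟨-, h⟩ | ⟨-, hlt', -⟩)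
      · exact absurd h hnz
      · norm_num at h
      · exact h
      · exact absurd hts (not_le.mpr hlt')
    · exact fun h => Or.inr (Or.inr (Or.inl ⟨rfl, h⟩))
end
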